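/- If a sequence (x_n) converges to L with x_n ≠ L for all n and the errors satisfy (x_{n+1} - L)/(x_n - L) → c for some constant c with |c| < 1 and c ≠ 0 (linear convergence), then for sufficiently large n the denominator x_{n+2} - 2x_{n+1} + x_n is eventually nonzero, and the Aitken sequence y_n = x_n - (x_{n+1} - x_n)²/(x_{n+2} - 2x_{n+1} + x_n) satisfies (y_n - L)/(x_n - L) → 0. -/

import Mathlib

/-!
Write `r n = (x (n+1) - L) / (x n - L)` for the error ratios. Then
`Δ²x_n = (x n - L) * (r (n+1) * r n - 2 * r n + 1)`, and the Aitken error divided by the original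
error equals `r n * (r (n+1) - r n) / (r (n+1) * r n - 2 * r n + 1)`. As `r n → c ≠ 1`, the
denominator tends to `(c - 1)^2 ≠ 0` while the numerator tends to `c * (c - c) = 0`.
-/

open Filter Topology

namespace Aitken

variable {K : Type*} [Field K] (x : ℕ → K) (L : K)

def errorRatio (n : ℕ) : K := (x (n + 1) - L) / (x n - L)

def accel (n : ℕ) : K := x n - (x (n + 1) - x n) ^ 2 / (x (n + 2) - 2 * x (n + 1) + x n)

variable {x L}

local notation "r" => errorRatio x L

theorem sub_succ_eq_errorRatio_mul {n : ℕ} (hn : x n ≠ L) :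
    x (n + 1) - L = r n * (x n - L) :=
  (div_mul_cancel₀ _ (sub_ne_zero.mpr hn)).symm

theorem secondDiff_eq {n : ℕ} (h₀ : x n ≠ L) (h₁ : x (n + 1) ≠ L) :
    x (n + 2) - 2 * x (n + 1) + x n = (x n - L) * (r (n + 1) * r n - 2 * r n + 1) := by
  have e₁ := sub_succ_eq_errorRatio_mul h₀
  have e₂ := sub_succ_eq_errorRatio_mul h₁
  linear_combination e₂ + (r (n + 1) - 2) * e₁

theorem accel_sub_div_eq {n : ℕ} (h₀ : x n ≠ L) (h₁ : x (n + 1) ≠ L)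
    (hD : r (n + 1) * r n - 2 * r n + 1 ≠ 0) :
    (accel x n - L) / (x n - L) = r n * (r (n + 1) - r n) / (r (n + 1) * r n - 2 * r n + 1) := by
  have e₀ : x n - L ≠ 0 := sub_ne_zero.mpr h₀
  have hΔ : x (n + 1) - x n = (r n - 1) * (x n - L) := by
    linear_combination sub_succ_eq_errorRatio_mul h₀
  rw [accel, secondDiff_eq h₀ h₁, hΔ]
  generalize hDdef : r (n + 1) * r n - 2 * r n + 1 = D at hD ⊢
  field_simp
  linear_combination (L - x n) * hDdef

variable [TopologicalSpace K] [IsTopologicalDivisionRing K] {c : K}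

theorem tendsto_secondDiff_div (hc : Tendsto r atTop (𝓝 c)) :
    Tendsto (fun n ↦ r (n + 1) * r n - 2 * r n + 1) atTop (𝓝 ((c - 1) ^ 2)) := by
  have hc' : Tendsto (fun n ↦ r (n + 1)) atTop (𝓝 c) := hc.comp (tendsto_add_atTop_nat 1)
  convert ((hc'.mul hc).sub (tendsto_const_nhds.mul hc)).add tendsto_const_nhds using 2
  ring

theorem eventually_secondDiff_ne_zero [T1Space K] (hne : ∀ n, x n ≠ L)
    (hc : Tendsto r atTop (𝓝 c)) (hc1 : c ≠ 1) :
    ∀ᶠ n in atTop, x (n + 2) - 2 * x (n + 1) + x n ≠ 0 := by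
  filter_upwards [(tendsto_secondDiff_div hc).eventually_ne (pow_ne_zero 2 (sub_ne_zero.mpr hc1))]
    with n hn
  rw [secondDiff_eq (hne n) (hne (n + 1))]
  exact mul_ne_zero (sub_ne_zero.mpr (hne n)) hn

theorem tendsto_accel_sub_div [T1Space K] (hne : ∀ n, x n ≠ L) (hc : Tendsto r atTop (𝓝 c))
    (hc1 : c ≠ 1) :
    Tendsto (fun n ↦ (accel x n - L) / (x n - L)) atTop (𝓝 0) := by
  have hD := tendsto_secondDiff_div hc
  have hD0 : (c - 1) ^ 2 ≠ 0 := pow_ne_zero 2 (sub_ne_zero.mpr hc1)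
  have hc' : Tendsto (fun n ↦ r (n + 1)) atTop (𝓝 c) := hc.comp (tendsto_add_atTop_nat 1)
  have hlim := (hc.mul (hc'.sub hc)).div hD hD0
  rw [sub_self, mul_zero, zero_div] at hlim
  refine hlim.congr' ?_
  filter_upwards [hD.eventually_ne hD0] with n hn
  exact (accel_sub_div_eq (hne n) (hne (n + 1)) hn).symm

end Aitken

open Aitken in
theorem aitken_acceleration_general (x : ℕ → ℝ) (L c : ℝ)
    (hne : ∀ n, x n ≠ L)
    (hc : Filter.Tendsto (fun n => (x (n + 1) - L) / (x n - L)) Filter.atTop (nhds c))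
    (hc1 : |c| < 1) :
    (∀ᶠ n in Filter.atTop, x (n + 2) - 2 * x (n + 1) + x n ≠ 0) ∧
      Filter.Tendsto
        (fun n =>
          ((x n - (x (n + 1) - x n) ^ 2 / (x (n + 2) - 2 * x (n + 1) + x n)) - L) /
            (x n - L))
        Filter.atTop (nhds 0) := by
  have hc_ne_one : c ≠ 1 := fun h ↦ by simp [h] at hc1
  exact ⟨eventually_secondDiff_ne_zero hne hc hc_ne_one, tendsto_accel_sub_div hne hc hc_ne_one⟩

theorem aitken_acceleration (x : ℕ → ℝ) (L c : ℝ)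
    (hx : Filter.Tendsto x Filter.atTop (nhds L))
    (hne : ∀ n, x n ≠ L)
    (hc : Filter.Tendsto (fun n => (x (n + 1) - L) / (x n - L)) Filter.atTop (nhds c))
    (hc1 : |c| < 1) (hc0 : c ≠ 0) :
    (∀ᶠ n in Filter.atTop, x (n + 2) - 2 * x (n + 1) + x n ≠ 0) ∧
      Filter.Tendsto
        (fun n =>
          ((x n - (x (n + 1) - x n) ^ 2 / (x (n + 2) - 2 * x (n + 1) + x n)) - L) /
            (x n - L))
        Filter.atTop (nhds 0) :=
  aitken_acceleration_general x L c hne hc hc1
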